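/- Let d ∈ {1,2,3,7,11} and let W_d ⊂ ℂ be the fundamental polygon: for d ∈ {1,2} the closed rectangle with vertices 0, 1, ω_d, ω_d + 1, and for d ∈ {3,7,11} the closed triangle with vertices 0, 1, ω_d. Suppose R₁ → R₂ is an edge of the Farey graph E_d and R₁ lies in the interior of W_d. Then either R₂ = ∞ or R₂ lies in (the closure of) W_d. -/

import Mathlib

/-- `ω_d`: the generator of the ring of integers of `ℚ(√(-d))`. -/
noncomputable def omegaD (d : ℕ) : ℂ :=
  if d % 4 = 3 then (1 + Complex.I * Real.sqrt d) / 2 else Complex.I * Real.sqrt d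

/-- The ring of integers `ℤ[ω_d]` of `ℚ(√(-d))`, as a subset of `ℂ`. -/
def ringInt (d : ℕ) : Set ℂ := {z | ∃ a b : ℤ, z = (a : ℂ) + (b : ℂ) * omegaD d}

/-- `p` and `q` are coprime in `ℤ[ω_d]`. -/
def CoprimeIn (d : ℕ) (p q : ℂ) : Prop :=
  ∃ u v : ℂ, u ∈ ringInt d ∧ v ∈ ringInt d ∧ u * p + v * q = 1

/-- `x` is an element of the field `ℚ(√(-d)) ⊆ ℂ`. -/
def inK (d : ℕ) (x : ℂ) : Prop :=
  ∃ p q : ℂ, p ∈ ringInt d ∧ q ∈ ringInt d ∧ q ≠ 0 ∧ x = p / q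

/-- The point `p/q` of `ℂ ∪ {∞}`, with `p/0 = ∞`. -/
noncomputable def divC (p q : ℂ) : OnePoint ℂ :=
  if q = 0 then OnePoint.infty else ((p / q : ℂ) : OnePoint ℂ)

/-- Two points of `ℚ(√(-d)) ∪ {∞}` are Farey neighbours (joined by an edge of
the Farey graph `E_d`) if they have coprime representations `p₁/q₁`, `p₂/q₂`
with `|p₁q₂ − p₂q₁| = 1`. -/
def FareyAdj (d : ℕ) (x y : OnePoint ℂ) : Prop :=
  ∃ p₁ q₁ p₂ q₂ : ℂ, p₁ ∈ ringInt d ∧ q₁ ∈ ringInt d ∧ p₂ ∈ ringInt d ∧ q₂ ∈ ringInt d ∧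
    CoprimeIn d p₁ q₁ ∧ CoprimeIn d p₂ q₂ ∧ x = divC p₁ q₁ ∧ y = divC p₂ q₂ ∧
    ‖p₁ * q₂ - p₂ * q₁‖ = 1

/-- `f 0 → f 1 → ⋯ → f n` is a walk (of length `n`) in the Farey graph `E_d`. -/
def IsWalk (d n : ℕ) (f : ℕ → OnePoint ℂ) : Prop := ∀ k, k < n → FareyAdj d (f k) (f (k + 1))

/-- `f 0 → ⋯ → f n` is a geodesic path in `E_d`: a walk of minimal length
among all walks with the same endpoints. -/
def IsGeodesicWalk (d n : ℕ) (f : ℕ → OnePoint ℂ) : Prop :=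
  IsWalk d n f ∧ ∀ (m : ℕ) (g : ℕ → OnePoint ℂ), IsWalk d m g → g 0 = f 0 → g m = f n → n ≤ m

/-- Numerators of the convergents of `[a₁, a₂, …]` (`a 0` is unused):
`p₀ = 0`, `p₁ = 1`, `p_k = a_k p_{k−1} + p_{k−2}`. -/
noncomputable def cfP (a : ℕ → ℂ) : ℕ → ℂ
  | 0 => 0
  | 1 => 1
  | (k + 2) => a (k + 2) * cfP a (k + 1) + cfP a k

/-- Denominators of the convergents of `[a₁, a₂, …]`:
`q₀ = 1`, `q₁ = a₁`, `q_k = a_k q_{k−1} + q_{k−2}`. -/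
noncomputable def cfQ (a : ℕ → ℂ) : ℕ → ℂ
  | 0 => 1
  | 1 => a 1
  | (k + 2) => a (k + 2) * cfQ a (k + 1) + cfQ a k

/-- The walk `∞ → p₀/q₀ = 0 → p₁/q₁ → ⋯` along the convergents of `[a₁, a₂, …]`. -/
noncomputable def cfWalk (a : ℕ → ℂ) : ℕ → OnePoint ℂ :=
  fun k => if k = 0 then OnePoint.infty else divC (cfP a (k - 1)) (cfQ a (k - 1))

/-- The fundamental polygon `W_d ⊆ ℂ`: the closed rectangle with vertices
`0, 1, ω_d, ω_d + 1` for `d ∈ {1,2}` (i.e. `d ≢ 3 mod 4`), and the closed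
triangle with vertices `0, 1, ω_d` for `d ∈ {3,7,11}` (i.e. `d ≡ 3 mod 4`). -/
def Wpolygon (d : ℕ) : Set ℂ :=
  if d % 4 = 3 then convexHull ℝ {0, 1, omegaD d}
  else convexHull ℝ {0, 1, omegaD d, omegaD d + 1}

/-! `W_d` is the intersection of the closed half-planes to the left of its edges, and each
edge `a → b` joins two points of `ℤ[ω_d]` and has length `‖b - a‖ < 2 Im ω_d`. For
`p, q ∈ ℤ[ω_d]`, the signed area `Im (conj (b - a) (p/q - a))` of `a, b, p/q` times `‖q‖²` is
the imaginary part of an element of `ℤ[ω_d]`, hence an integer multiple of `Im ω_d`. So if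
`p₁/q₁` lies strictly to the left of the edge and `p₂/q₂` strictly to the right, the two signed
areas are at least `Im ω_d / ‖q₁‖²` and `Im ω_d / ‖q₂‖²` in size, while they differ by at most
`‖b - a‖ ‖p₁/q₁ - p₂/q₂‖ = ‖b - a‖ / (‖q₁‖ ‖q₂‖)` when `‖p₁ q₂ - p₂ q₁‖ = 1`. By AM-GM this
forces `‖b - a‖ ≥ 2 Im ω_d`. -/

open Complex ComplexConjugate

section Lattice

variable {d : ℕ}

lemma omegaD_of_mod_four_eq_three (h : d % 4 = 3) : omegaD d = ⟨1 / 2, √d / 2⟩ := by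
  simp [omegaD, h, Complex.ext_iff]

lemma omegaD_of_mod_four_ne_three (h : d % 4 ≠ 3) : omegaD d = ⟨0, √d⟩ := by
  simp [omegaD, h, Complex.ext_iff]

lemma omegaD_im_nonneg (d : ℕ) : 0 ≤ (omegaD d).im := by
  by_cases h : d % 4 = 3
  · rw [omegaD_of_mod_four_eq_three h]; positivity
  · rw [omegaD_of_mod_four_ne_three h]; positivity

lemma exists_omegaD_sq_eq (d : ℕ) : ∃ u v : ℤ, omegaD d ^ 2 = u + v * omegaD d := by
  have hs : (√d : ℝ) ^ 2 = d := Real.sq_sqrt d.cast_nonneg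
  by_cases h : d % 4 = 3
  · obtain ⟨k, rfl⟩ : ∃ k, d = 4 * k + 3 := ⟨d / 4, by omega⟩
    refine ⟨-(k + 1), 1, ?_⟩
    rw [omegaD_of_mod_four_eq_three h, Complex.ext_iff]
    push_cast at hs ⊢
    simp only [sq, mul_re, mul_im, add_re, add_im, neg_re, neg_im, natCast_re, natCast_im,
      one_re, one_im] at hs ⊢
    constructor <;> nlinarith
  · refine ⟨-d, 0, ?_⟩
    rw [omegaD_of_mod_four_ne_three h, Complex.ext_iff]
    simp only [sq, mul_re, mul_im, add_re, add_im, intCast_re, intCast_im] at hs ⊢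
    push_cast
    constructor <;> nlinarith

def ringIntSubring (d : ℕ) : Subring ℂ where
  carrier := ringInt d
  zero_mem' := ⟨0, 0, by simp⟩
  one_mem' := ⟨1, 0, by simp⟩
  add_mem' := by
    rintro _ _ ⟨a, b, rfl⟩ ⟨a', b', rfl⟩
    exact ⟨a + a', b + b', by push_cast; ring⟩
  neg_mem' := by
    rintro _ ⟨a, b, rfl⟩
    exact ⟨-a, -b, by push_cast; ring⟩
  mul_mem' := by
    rintro _ _ ⟨a, b, rfl⟩ ⟨a', b', rfl⟩
    obtain ⟨u, v, huv⟩ := exists_omegaD_sq_eq d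
    exact ⟨a * a' + b * b' * u, a * b' + b * a' + b * b' * v, by
      push_cast; linear_combination (b : ℂ) * b' * huv⟩

lemma omegaD_mem : omegaD d ∈ ringIntSubring d := ⟨0, 1, by simp⟩

lemma conj_omegaD_mem : conj (omegaD d) ∈ ringIntSubring d := by
  by_cases h : d % 4 = 3
  · refine ⟨1, -1, ?_⟩
    rw [omegaD_of_mod_four_eq_three h]
    apply Complex.ext <;> simp
    norm_num
  · refine ⟨0, -1, ?_⟩
    rw [omegaD_of_mod_four_ne_three h]
    apply Complex.ext <;> simp

lemma conj_mem_ringIntSubring {x : ℂ} (hx : x ∈ ringIntSubring d) :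
    conj x ∈ ringIntSubring d := by
  obtain ⟨a, b, rfl⟩ := hx
  simpa using add_mem (intCast_mem _ a) (mul_mem (intCast_mem _ b) conj_omegaD_mem)

lemma omegaD_im_le_im {x : ℂ} (hx : x ∈ ringIntSubring d) (hpos : 0 < x.im) :
    (omegaD d).im ≤ x.im := by
  obtain ⟨a, b, rfl⟩ := hx
  have hω := omegaD_im_nonneg d
  simp only [add_im, intCast_im, mul_im, intCast_re, zero_add, zero_mul, add_zero] at hpos ⊢
  have hb : (0 : ℤ) < b := by
    by_contra! hb
    nlinarith [(Int.cast_nonpos (R := ℝ)).mpr hb]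
  have hb' : (1 : ℝ) ≤ b := by exact_mod_cast hb
  nlinarith

end Lattice

/-- Twice the signed area of the triangle `a b z`: positive iff `z` lies to the left of the
line from `a` to `b`. -/
def orient (a b z : ℂ) : ℝ := (conj (b - a) * (z - a)).im

lemma orient_eq (a b z : ℂ) :
    orient a b z = (b.re - a.re) * (z.im - a.im) - (b.im - a.im) * (z.re - a.re) := by
  simp only [orient, mul_im, conj_re, conj_im, sub_re, sub_im]; ring

lemma orient_swap (a b z : ℂ) : orient b a z = -orient a b z := by
  simp only [orient_eq]; ring

lemma convex_setOf_orient_nonneg (a b : ℂ) : Convex ℝ {z | 0 ≤ orient a b z} := by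
  intro x hx y hy s t hs ht hst
  obtain rfl : t = 1 - s := by linarith
  have hcombo : orient a b (s • x + (1 - s) • y) = s * orient a b x + (1 - s) * orient a b y := by
    simp only [orient_eq, add_re, add_im, real_smul, mul_re, mul_im, ofReal_re, ofReal_im]
    ring
  rw [Set.mem_ofPred_eq]
  exact hcombo ▸ add_nonneg (mul_nonneg hs hx) (mul_nonneg ht hy)

lemma orient_pos_of_mem_interior {a b z : ℂ} {s : Set ℂ} (hab : a ≠ b)
    (hs : s ⊆ {z | 0 ≤ orient a b z}) (hz : z ∈ interior s) : 0 < orient a b z := by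
  have hne : conj (b - a) ≠ 0 := (map_ne_zero _).mpr (sub_ne_zero.mpr hab.symm)
  let h : ℂ ≃ₜ ℂ := (Homeomorph.subRight a).trans (Homeomorph.mulLeft₀ _ hne)
  have hpre : {z | 0 ≤ orient a b z} = h ⁻¹' {w | 0 ≤ w.im} := rfl
  have := interior_mono hs hz
  rw [hpre, ← h.preimage_interior, interior_setOfPred_le_im] at this
  exact this

lemma convexHull_triple_eq {a b c : ℂ} (h : 0 < orient a b c) :
    convexHull ℝ {a, b, c} = {z | 0 ≤ orient a b z ∧ 0 ≤ orient b c z ∧ 0 ≤ orient c a z} := by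
  apply subset_antisymm
  · refine convexHull_min ?_ ((convex_setOf_orient_nonneg a b).inter
      ((convex_setOf_orient_nonneg b c).inter (convex_setOf_orient_nonneg c a)))
    rw [orient_eq] at h
    rintro _ (rfl | rfl | rfl) <;> refine ⟨?_, ?_, ?_⟩ <;> simp only [orient_eq] <;> nlinarith
  · rintro z ⟨hab, hbc, hca⟩
    set D := orient a b c
    have hsum : orient b c z / D + orient c a z / D + orient a b z / D = 1 := by
      field_simp
      simp only [D, orient_eq]; ring
    have hz : z = (orient b c z / D) • a + (orient c a z / D) • b + (orient a b z / D) • c := by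
      apply Complex.ext <;>
      · simp only [add_re, add_im, real_smul, mul_re, mul_im, ofReal_re, ofReal_im]
        field_simp
        simp only [D, orient_eq]; ring
    rw [hz]
    have := (convex_convexHull ℝ ({a, b, c} : Set ℂ)).sum_mem (t := Finset.univ)
      (w := ![orient b c z / D, orient c a z / D, orient a b z / D]) (z := ![a, b, c])
    simp only [Finset.mem_univ, forall_const, Fin.forall_fin_succ, Fin.sum_univ_three,
      Matrix.cons_val_zero, Matrix.cons_val_one, Matrix.cons_val_two, Matrix.cons_val_succ,
      IsEmpty.forall_iff, and_true] at this
    exact this ⟨div_nonneg hbc h.le, div_nonneg hca h.le, div_nonneg hab h.le⟩ hsum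
      ⟨subset_convexHull ℝ _ (by simp), subset_convexHull ℝ _ (by simp),
        subset_convexHull ℝ _ (by simp)⟩

lemma convexHull_parallelogram_eq {u v : ℂ} (h : 0 < orient 0 u v) :
    convexHull ℝ {0, u, v, v + u} = {z | 0 ≤ orient 0 u z ∧ 0 ≤ orient u (v + u) z ∧
      0 ≤ orient (v + u) v z ∧ 0 ≤ orient v 0 z} := by
  apply subset_antisymm
  · refine convexHull_min ?_ ((convex_setOf_orient_nonneg _ _).inter
      ((convex_setOf_orient_nonneg _ _).inter
        ((convex_setOf_orient_nonneg _ _).inter (convex_setOf_orient_nonneg _ _))))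
    simp only [orient_eq, zero_re, zero_im] at h
    rintro _ (rfl | rfl | rfl | rfl) <;> refine ⟨?_, ?_, ?_, ?_⟩ <;>
      simp only [orient_eq, add_re, add_im, zero_re, zero_im] <;> nlinarith
  · rintro z ⟨h₁, h₂, h₃, h₄⟩
    have hD : orient 0 u (v + u) = orient 0 u v := by
      simp only [orient_eq, add_re, add_im, zero_re, zero_im]; ring
    have hD' : orient 0 (v + u) v = orient 0 u v := by
      simp only [orient_eq, add_re, add_im, zero_re, zero_im]; ring
    rcases le_total 0 (orient 0 (v + u) z) with hdiag | hdiag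
    · have hz : z ∈ convexHull ℝ {0, v + u, v} := by
        rw [convexHull_triple_eq (hD' ▸ h)]
        exact ⟨hdiag, h₃, h₄⟩
      refine convexHull_mono ?_ hz
      simp [Set.insert_subset_iff]
    · have hz : z ∈ convexHull ℝ {0, u, v + u} := by
        rw [convexHull_triple_eq (hD ▸ h)]
        exact ⟨h₁, h₂, by rw [orient_swap]; linarith⟩
      refine convexHull_mono ?_ hz
      simp [Set.insert_subset_iff]

lemma orient_sub_orient_le (a b z w : ℂ) : orient a b z - orient a b w ≤ ‖b - a‖ * ‖z - w‖ := by
  calc orient a b z - orient a b w = (conj (b - a) * (z - w)).im := by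
        simp only [orient, ← sub_im, ← mul_sub, sub_sub_sub_cancel_right]
    _ ≤ ‖b - a‖ * ‖z - w‖ := (im_le_norm _).trans_eq (by rw [norm_mul, norm_conj])

lemma orient_div_mul_sq_norm (a b p : ℂ) {q : ℂ} (hq : q ≠ 0) :
    orient a b (p / q) * ‖q‖ ^ 2 = (conj (b - a) * (p - a * q) * conj q).im := by
  have : conj (b - a) * (p - a * q) * conj q = conj (b - a) * (p / q - a) * (q * conj q) := by
    field_simp
  rw [this, mul_conj, im_mul_ofReal, Complex.sq_norm, orient]

lemma omegaD_im_le_orient_mul_sq_norm {d : ℕ} {a b p q : ℂ} (ha : a ∈ ringIntSubring d)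
    (hb : b ∈ ringIntSubring d) (hp : p ∈ ringIntSubring d) (hq : q ∈ ringIntSubring d)
    (hq0 : q ≠ 0) (h : 0 < orient a b (p / q)) : (omegaD d).im ≤ orient a b (p / q) * ‖q‖ ^ 2 := by
  have hpos := mul_pos h (pow_pos (norm_pos_iff.2 hq0) 2)
  rw [orient_div_mul_sq_norm a b p hq0] at hpos ⊢
  refine omegaD_im_le_im (mul_mem (mul_mem ?_ ?_) (conj_mem_ringIntSubring hq)) hpos
  · exact conj_mem_ringIntSubring (sub_mem hb ha)
  · exact sub_mem hp (mul_mem ha hq)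

lemma two_mul_le_add_mul_mul {δ A B x y : ℝ} (hδ : 0 ≤ δ) (hx : 0 < x) (hy : 0 < y)
    (hA : δ ≤ A * x ^ 2) (hB : δ ≤ B * y ^ 2) : 2 * δ ≤ (A + B) * (x * y) := by
  have hxy : 0 < x * y := mul_pos hx hy
  refine le_of_mul_le_mul_right ?_ hxy
  nlinarith [mul_nonneg hδ (sq_nonneg (x - y)), mul_le_mul_of_nonneg_right hA (sq_nonneg y),
    mul_le_mul_of_nonneg_right hB (sq_nonneg x)]

theorem orient_div_nonneg_of_norm_det_eq_one {d : ℕ} {a b p₁ q₁ p₂ q₂ : ℂ}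
    (ha : a ∈ ringIntSubring d) (hb : b ∈ ringIntSubring d)
    (hp₁ : p₁ ∈ ringIntSubring d) (hq₁ : q₁ ∈ ringIntSubring d)
    (hp₂ : p₂ ∈ ringIntSubring d) (hq₂ : q₂ ∈ ringIntSubring d)
    (hq₁0 : q₁ ≠ 0) (hq₂0 : q₂ ≠ 0) (hdet : ‖p₁ * q₂ - p₂ * q₁‖ = 1)
    (hab : ‖b - a‖ < 2 * (omegaD d).im) (h₁ : 0 < orient a b (p₁ / q₁)) :
    0 ≤ orient a b (p₂ / q₂) := by
  by_contra! h₂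
  have hA := omegaD_im_le_orient_mul_sq_norm ha hb hp₁ hq₁ hq₁0 h₁
  have hB := omegaD_im_le_orient_mul_sq_norm hb ha hp₂ hq₂ hq₂0 (by rw [orient_swap]; linarith)
  rw [orient_swap] at hB
  have hdist : ‖p₁ / q₁ - p₂ / q₂‖ * (‖q₁‖ * ‖q₂‖) = 1 := by
    rw [← hdet, ← norm_mul, ← norm_mul]
    congr 1
    field_simp
  have hsep : 2 * (omegaD d).im ≤ ‖b - a‖ :=
    calc 2 * (omegaD d).im
        ≤ (orient a b (p₁ / q₁) + -orient a b (p₂ / q₂)) * (‖q₁‖ * ‖q₂‖) :=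
          two_mul_le_add_mul_mul (omegaD_im_nonneg d) (norm_pos_iff.2 hq₁0)
            (norm_pos_iff.2 hq₂0) hA hB
      _ ≤ ‖b - a‖ * ‖p₁ / q₁ - p₂ / q₂‖ * (‖q₁‖ * ‖q₂‖) := by
          gcongr
          linarith [orient_sub_orient_le a b (p₁ / q₁) (p₂ / q₂)]
      _ = ‖b - a‖ := by rw [mul_assoc, hdist, mul_one]
  linarith

section FundamentalPolygon

variable {d : ℕ}

lemma omegaD_im_pos (hd : 0 < d) : 0 < (omegaD d).im := by
  have : 0 < √d := Real.sqrt_pos.2 (Nat.cast_pos.2 hd)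
  by_cases h : d % 4 = 3
  · rw [omegaD_of_mod_four_eq_three h]; positivity
  · rw [omegaD_of_mod_four_ne_three h]; exact this

noncomputable def wEdges (d : ℕ) : List (ℂ × ℂ) :=
  if d % 4 = 3 then [(0, 1), (1, omegaD d), (omegaD d, 0)]
  else [(0, 1), (1, omegaD d + 1), (omegaD d + 1, omegaD d), (omegaD d, 0)]

lemma Wpolygon_eq (hd : 0 < d) : Wpolygon d = {z | ∀ e ∈ wEdges d, 0 ≤ orient e.1 e.2 z} := by
  have hD : 0 < orient 0 1 (omegaD d) := by
    simpa [orient_eq] using omegaD_im_pos hd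
  by_cases h : d % 4 = 3
  · rw [Wpolygon, wEdges, if_pos h, if_pos h, convexHull_triple_eq hD]
    simp
  · rw [Wpolygon, wEdges, if_neg h, if_neg h, convexHull_parallelogram_eq hD]
    simp

lemma norm_lt_of_normSq_lt {x : ℂ} {r : ℝ} (hr : 0 < r) (h : normSq x < r ^ 2) : ‖x‖ < r := by
  rwa [norm_def, Real.sqrt_lt' hr]

lemma wEdges_spec (hd : 0 < d) {e : ℂ × ℂ} (he : e ∈ wEdges d) :
    e.1 ≠ e.2 ∧ e.1 ∈ ringIntSubring d ∧ e.2 ∈ ringIntSubring d ∧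
      ‖e.2 - e.1‖ < 2 * (omegaD d).im := by
  have hs : √d ^ 2 = d := Real.sq_sqrt (Nat.cast_nonneg d)
  have hs₀ : 0 ≤ √d := Real.sqrt_nonneg d
  have hω := omegaD_mem (d := d)
  have hpos := omegaD_im_pos hd
  have hne₀ : omegaD d ≠ 0 := ne_of_apply_ne im (by simpa using hpos.ne')
  have hne₁ : (1 : ℂ) ≠ omegaD d := ne_of_apply_ne im (by simpa using hpos.ne)
  have hlen (x : ℂ) : x.re * x.re + x.im * x.im < (2 * (omegaD d).im) ^ 2 →
      ‖x‖ < 2 * (omegaD d).im :=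
    norm_lt_of_normSq_lt (by positivity)
  unfold wEdges at he
  split_ifs at he with h
  · have hd3 : (3 : ℝ) ≤ d := by exact_mod_cast (by omega : 3 ≤ d)
    have hω' := omegaD_of_mod_four_eq_three h
    have h₀₁ : ‖(1 : ℂ) - 0‖ < 2 * (omegaD d).im := by
      simp only [sub_zero, norm_one, hω']; nlinarith
    have h₁ω : ‖omegaD d - 1‖ < 2 * (omegaD d).im := hlen _ (by simp [hω']; nlinarith)
    have hω₀ : ‖0 - omegaD d‖ < 2 * (omegaD d).im := hlen _ (by simp [hω']; nlinarith)
    simp only [List.mem_cons, List.not_mem_nil, or_false] at he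
    rcases he with rfl | rfl | rfl
    · exact ⟨zero_ne_one, zero_mem _, one_mem _, h₀₁⟩
    · exact ⟨hne₁, one_mem _, hω, h₁ω⟩
    · exact ⟨hne₀, hω, zero_mem _, hω₀⟩
  · have hd1 : (1 : ℝ) ≤ d := by exact_mod_cast hd
    have hω' := omegaD_of_mod_four_ne_three h
    have hω₁ := add_mem hω (one_mem (ringIntSubring d))
    have h₀₁ : ‖(1 : ℂ) - 0‖ < 2 * (omegaD d).im := by
      simp only [sub_zero, norm_one, hω']; nlinarith
    have h₁ω : ‖omegaD d + 1 - 1‖ < 2 * (omegaD d).im := hlen _ (by simp [hω']; nlinarith)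
    have hωω : ‖omegaD d - (omegaD d + 1)‖ < 2 * (omegaD d).im := by
      simp only [sub_add_cancel_left, norm_neg, norm_one, hω']; nlinarith
    have hω₀ : ‖0 - omegaD d‖ < 2 * (omegaD d).im := hlen _ (by simp [hω']; nlinarith)
    simp only [List.mem_cons, List.not_mem_nil, or_false] at he
    rcases he with rfl | rfl | rfl | rfl
    · exact ⟨zero_ne_one, zero_mem _, one_mem _, h₀₁⟩
    · exact ⟨by simpa [eq_comm] using hne₀, one_mem _, hω₁, h₁ω⟩
    · exact ⟨by simp, hω₁, hω, hωω⟩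
    · exact ⟨hne₀, hω, zero_mem _, hω₀⟩

lemma pos_of_mem_interior_Wpolygon {z : ℂ} (hz : z ∈ interior (Wpolygon d)) : 0 < d := by
  refine Nat.pos_of_ne_zero ?_
  rintro rfl
  have hW : Wpolygon 0 ⊆ {z | 0 ≤ orient 0 1 z} ∩ {z | 0 ≤ orient 1 0 z} := by
    rw [Wpolygon, if_neg (by norm_num), omegaD_of_mod_four_ne_three (by norm_num)]
    refine convexHull_min ?_
      ((convex_setOf_orient_nonneg 0 1).inter (convex_setOf_orient_nonneg 1 0))
    rintro _ (rfl | rfl | rfl | rfl) <;> simp [orient_eq]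
  have h₁ := orient_pos_of_mem_interior zero_ne_one (hW.trans Set.inter_subset_left) hz
  have h₂ := orient_pos_of_mem_interior one_ne_zero (hW.trans Set.inter_subset_right) hz
  rw [orient_swap] at h₂
  linarith

end FundamentalPolygon

theorem farey_neighbour_of_interior_general (d : ℕ)
    (R₁ R₂ : OnePoint ℂ) (hadj : FareyAdj d R₁ R₂)
    (z₁ : ℂ) (hR₁ : R₁ = ((z₁ : ℂ) : OnePoint ℂ)) (hz₁ : z₁ ∈ interior (Wpolygon d)) :
    R₂ = OnePoint.infty ∨ ∃ z₂ ∈ Wpolygon d, R₂ = ((z₂ : ℂ) : OnePoint ℂ) := by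
  obtain ⟨p₁, q₁, p₂, q₂, hp₁, hq₁, hp₂, hq₂, -, -, h₁, rfl, hdet⟩ := hadj
  have hq₁0 : q₁ ≠ 0 := by
    rintro rfl
    simp [divC, hR₁] at h₁
  obtain rfl : z₁ = p₁ / q₁ := by
    rw [hR₁, divC, if_neg hq₁0] at h₁
    exact OnePoint.coe_injective h₁
  by_cases hq₂0 : q₂ = 0
  · exact Or.inl (if_pos hq₂0)
  refine Or.inr ⟨p₂ / q₂, ?_, if_neg hq₂0⟩
  have hd := pos_of_mem_interior_Wpolygon hz₁
  rw [Wpolygon_eq hd]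
  intro e he
  obtain ⟨hne, ha, hb, hlen⟩ := wEdges_spec hd he
  exact orient_div_nonneg_of_norm_det_eq_one ha hb hp₁ hq₁ hp₂ hq₂ hq₁0 hq₂0 hdet hlen
    (orient_pos_of_mem_interior hne (fun _ hz => (Wpolygon_eq hd).subset hz e he) hz₁)

/-- Let `d ∈ {1,2,3,7,11}`. If `R₁ → R₂` is an edge of the
Farey graph `E_d` and `R₁` lies in the interior of the fundamental polygon
`W_d`, then either `R₂ = ∞` or `R₂` lies in (the closure of) `W_d`. -/
theorem farey_neighbour_of_interior (d : ℕ) (hd : d ∈ ({1, 2, 3, 7, 11} : Set ℕ))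
    (R₁ R₂ : OnePoint ℂ) (hadj : FareyAdj d R₁ R₂)
    (z₁ : ℂ) (hR₁ : R₁ = ((z₁ : ℂ) : OnePoint ℂ)) (hz₁ : z₁ ∈ interior (Wpolygon d)) :
    R₂ = OnePoint.infty ∨ ∃ z₂ ∈ Wpolygon d, R₂ = ((z₂ : ℂ) : OnePoint ℂ) :=
  farey_neighbour_of_interior_general d R₁ R₂ hadj z₁ hR₁ hz₁
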